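/- arXiv:2011.09868 — 6 statements merged into one kernel-verified Lean document; each statement's English description precedes it below -/
import Mathlib

section
/- In every iH₃-algebra A, for all x, y ∈ A the element ((x→y)→y) ∧ ((y→x)→x) is the supremum of the set {x, y} with respect to the order defined by x ≤ y iff x→y = 1. -/
class iH3 (A : Type*) extends One A where
  imp : A → A → A
  inf : A → A → A
  h1 : ∀ x y : A, imp x (imp y x) = 1
  h2 : ∀ x y z : A, imp (imp x (imp y z)) (imp (imp x y) (imp x z)) = 1
  h3 : ∀ x y : A, imp x y = 1 → imp y x = 1 → x = y
  it3 : ∀ x y z : A, imp (imp (imp x y) z) (imp (imp (imp z x) z) z) = 1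
  ih1 : ∀ x y z : A, inf x (inf y z) = inf (inf x y) z
  ih2 : ∀ x : A, inf x x = x
  ih3 : ∀ x y : A, inf x (imp x y) = inf x y
  ih4 : ∀ x y z : A, imp (imp x (inf y z)) (inf (imp x z) (imp x y)) = 1

namespace iH3Aux

variable {A : Type*} [iH3 A]

lemma mp {a b : A} (hab : iH3.imp a b = 1) (ha : a = 1) : b = 1 := by
  have hb1 : iH3.imp b (1 : A) = 1 := by
    have h := iH3.h1 b a
    rw [hab] at h; exact h
  rw [ha] at hab
  exact iH3.h3 b 1 hb1 hab

lemma iref (x : A) : iH3.imp x x = 1 := by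
  have s := iH3.h2 x (iH3.imp x x) x
  have k1 := iH3.h1 x (iH3.imp x x)
  have k2 := iH3.h1 x x
  exact mp (mp s k1) k2

lemma imp_one (x : A) : iH3.imp x (1 : A) = 1 :=
  mp (iH3.h1 1 x) rfl

lemma one_imp (x : A) : iH3.imp (1 : A) x = x := by
  have s := iH3.h2 (iH3.imp 1 x) 1 x
  have t := mp s (iref (iH3.imp 1 x))
  have u := mp t (imp_one _)
  exact iH3.h3 _ _ u (iH3.h1 x 1)

lemma itrans {x y z : A} (hxy : iH3.imp x y = 1) (hyz : iH3.imp y z = 1) :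
    iH3.imp x z = 1 := by
  have a1 : iH3.imp x (iH3.imp y z) = 1 := by rw [hyz]; exact imp_one x
  exact mp (mp (iH3.h2 x y z) a1) hxy

lemma exch {x y z : A} (h : iH3.imp x (iH3.imp y z) = 1) :
    iH3.imp y (iH3.imp x z) = 1 :=
  itrans (iH3.h1 y x) (mp (iH3.h2 x y z) h)

lemma lemA (x y : A) : iH3.imp x (iH3.imp (iH3.imp x y) y) = 1 :=
  exch (iref (iH3.imp x y))

lemma mono2 {a b : A} (h : iH3.imp a b = 1) (c : A) :
    iH3.imp (iH3.imp c a) (iH3.imp c b) = 1 :=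
  mp (iH3.h2 c a b) (by rw [h]; exact imp_one c)

lemma anti1 {a b : A} (h : iH3.imp a b = 1) (c : A) :
    iH3.imp (iH3.imp b c) (iH3.imp a c) = 1 :=
  exch (itrans h (lemA b c))

lemma inf_one (x : A) : iH3.inf x (1 : A) = x := by
  have h := iH3.ih3 x x
  rw [iref, iH3.ih2] at h; exact h

lemma comm1 {c d : A} (h : iH3.inf c d = 1) : iH3.inf d c = 1 := by
  have k := iH3.ih4 (1 : A) c d
  rw [one_imp, one_imp, one_imp, h, one_imp] at k
  exact k

lemma extract {c d : A} (h : iH3.inf c d = 1) : c = 1 ∧ d = 1 := by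
  have hdc := comm1 h
  have e1 : iH3.inf (1 : A) d = 1 := by
    calc iH3.inf (1 : A) d = iH3.inf (iH3.inf c d) d := by rw [h]
      _ = iH3.inf c (iH3.inf d d) := (iH3.ih1 c d d).symm
      _ = iH3.inf c d := by rw [iH3.ih2]
      _ = 1 := h
  have e2 : iH3.inf (1 : A) d = d := by
    calc iH3.inf (1 : A) d = iH3.inf (iH3.inf d c) d := by rw [hdc]
      _ = iH3.inf d (iH3.inf c d) := (iH3.ih1 d c d).symm
      _ = iH3.inf d 1 := by rw [h]
      _ = d := inf_one d
  have f1 : iH3.inf (1 : A) c = 1 := by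
    calc iH3.inf (1 : A) c = iH3.inf (iH3.inf d c) c := by rw [hdc]
      _ = iH3.inf d (iH3.inf c c) := (iH3.ih1 d c c).symm
      _ = iH3.inf d c := by rw [iH3.ih2]
      _ = 1 := hdc
  have f2 : iH3.inf (1 : A) c = c := by
    calc iH3.inf (1 : A) c = iH3.inf (iH3.inf c d) c := by rw [h]
      _ = iH3.inf c (iH3.inf d c) := (iH3.ih1 c d c).symm
      _ = iH3.inf c 1 := by rw [hdc]
      _ = c := inf_one c
  exact ⟨f2.symm.trans f1, e2.symm.trans e1⟩

lemma inf_le (y z : A) :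
    iH3.imp (iH3.inf y z) z = 1 ∧ iH3.imp (iH3.inf y z) y = 1 := by
  have k := iH3.ih4 (iH3.inf y z) y z
  rw [iref, one_imp] at k
  exact extract k

lemma glb {x a b : A} (ha : iH3.imp x a = 1) (hb : iH3.imp x b = 1) :
    iH3.imp x (iH3.inf a b) = 1 := by
  have e1 : iH3.inf x a = x := by
    have h := iH3.ih3 x a
    rw [ha, inf_one] at h; exact h.symm
  have e2 : iH3.inf x b = x := by
    have h := iH3.ih3 x b
    rw [hb, inf_one] at h; exact h.symm
  have e3 : iH3.inf x (iH3.inf a b) = x := by rw [iH3.ih1, e1, e2]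
  have k := (inf_le x (iH3.inf a b)).1
  rw [e3] at k
  exact k

end iH3Aux

/-- In every iH₃-algebra, `((x→y)→y) ∧ ((y→x)→x)` is the supremum of `{x, y}`
with respect to the order `x ≤ y iff x→y = 1`. -/
theorem stmt0 {A : Type*} [iH3 A] (x y : A) :
    iH3.imp x (iH3.inf (iH3.imp (iH3.imp x y) y) (iH3.imp (iH3.imp y x) x)) = 1 ∧
    iH3.imp y (iH3.inf (iH3.imp (iH3.imp x y) y) (iH3.imp (iH3.imp y x) x)) = 1 ∧
    ∀ z : A, iH3.imp x z = 1 → iH3.imp y z = 1 →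
      iH3.imp (iH3.inf (iH3.imp (iH3.imp x y) y) (iH3.imp (iH3.imp y x) x)) z = 1 := by
  open iH3Aux in
  refine ⟨glb (lemA x y) (iH3.h1 x (iH3.imp y x)),
          glb (iH3.h1 y (iH3.imp x y)) (lemA y x), ?_⟩
  intro z hx hy
  set a := iH3.imp (iH3.imp x y) y with ha
  set b := iH3.imp (iH3.imp y x) x with hb
  have hm := iH3Aux.inf_le a b
  have hmb : iH3.imp (iH3.inf a b) b = 1 := hm.1
  have hma : iH3.imp (iH3.inf a b) a = 1 := hm.2
  have s1 : iH3.imp a (iH3.imp (iH3.imp x y) z) = 1 := iH3Aux.mono2 hy (iH3.imp x y)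
  have s3 : iH3.imp (iH3.inf a b) (iH3.imp (iH3.imp (iH3.imp z x) z) z) = 1 :=
    iH3Aux.itrans (iH3Aux.itrans hma s1) (iH3.it3 x y z)
  have t1 : iH3.imp (iH3.imp z x) (iH3.imp y x) = 1 := iH3Aux.anti1 hy x
  have t2 : iH3.imp b (iH3.imp (iH3.imp z x) x) = 1 := iH3Aux.anti1 t1 x
  have t3 : iH3.imp (iH3.imp (iH3.imp z x) x) (iH3.imp (iH3.imp z x) z) = 1 :=
    iH3Aux.mono2 hx (iH3.imp z x)
  have t4 : iH3.imp (iH3.inf a b) (iH3.imp (iH3.imp z x) z) = 1 :=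
    iH3Aux.itrans (iH3Aux.itrans hmb t2) t3
  exact iH3Aux.mp (iH3Aux.mp (iH3.h2 (iH3.inf a b) (iH3.imp (iH3.imp z x) z) z) s3) t4
end

section
/- Let A be an iH₃△-algebra and define the weak implication x↣y := △x→y. Then for all x, y, z ∈ A: (wi1) 1↣x = x; (wi2) x↣x = 1; (wi3) x↣△x = 1; (wi4) x↣(y↣z) = (x↣y)↣(x↣z); (wi5) x↣(y↣x) = 1; (wi6) ((x↣y)↣x)↣x = 1. -/
class iH3D (A : Type*) extends iH3 A where
  box : A → A
  m1 : ∀ x : A, imp (box x) x = 1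
  m2 : ∀ x y : A, imp (imp (imp y (box y)) (imp x (box (box x)))) (box (imp x y)) = imp (box x) (box (box y))
  m3 : ∀ x y : A, imp (imp (box x) (box y)) (box x) = box x

/-- The weak implication `x↣y := △x→y`. -/
def wimp {A : Type*} [iH3D A] (x y : A) : A :=
  iH3.imp (iH3D.box x) y

section Aux

variable {A : Type*} [iH3D A]

open iH3 iH3D

local infixr:60 " ⤳ " => iH3.imp

lemma my_mp {a b : A} (ha : a = 1) (hab : a ⤳ b = 1) : b = 1 := by
  apply h3
  · exact hab ▸ h1 b a
  · exact ha ▸ hab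

lemma my_refl (x : A) : x ⤳ x = 1 := by
  have s1 : x ⤳ ((x ⤳ x) ⤳ x) = 1 := h1 x (x ⤳ x)
  have s2 : x ⤳ (x ⤳ x) = 1 := h1 x x
  exact my_mp s2 (my_mp s1 (h2 x (x ⤳ x) x))

lemma my_top (x : A) : x ⤳ 1 = 1 := by
  conv_lhs => rw [← my_refl x]
  exact h1 x x

lemma my_one_imp (x : A) : (1 : A) ⤳ x = x := by
  have h := h2 (1 ⤳ x) 1 x
  rw [my_refl ((1 : A) ⤳ x), my_top ((1 : A) ⤳ x)] at h
  exact h3 _ _ (my_mp rfl (my_mp rfl h)) (h1 x 1)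

lemma my_trans {x y z : A} (hxy : x ⤳ y = 1) (hyz : y ⤳ z = 1) : x ⤳ z = 1 := by
  have h := h2 x y z
  rw [hyz, my_top x, hxy, my_one_imp, my_one_imp] at h
  exact h

lemma my_perm {a b c : A} (h : a ⤳ (b ⤳ c) = 1) : b ⤳ (a ⤳ c) = 1 :=
  my_trans (h1 b a) (my_mp h (h2 a b c))

lemma my_antitone {u v : A} (h : u ⤳ v = 1) (w : A) : (v ⤳ w) ⤳ (u ⤳ w) = 1 :=
  my_perm (my_trans h (my_perm (my_refl (v ⤳ w))))

lemma my_exch (a b c : A) : a ⤳ (b ⤳ c) = b ⤳ (a ⤳ c) := by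
  have d : ∀ p q r : A, (p ⤳ (q ⤳ r)) ⤳ (q ⤳ (p ⤳ r)) = 1 := fun p q r =>
    my_trans (h2 p q r) (my_antitone (h1 q p) (p ⤳ r))
  exact h3 _ _ (d a b c) (d b a c)

lemma my_keyS (a b c : A) : a ⤳ (b ⤳ c) = (a ⤳ b) ⤳ (a ⤳ c) := by
  apply h3
  · exact h2 a b c
  · have h := my_antitone (h1 b a) (a ⤳ c)
    rw [my_exch b a c] at h
    exact h

lemma my_box_one : iH3D.box (1 : A) = 1 := by
  have e1 := m2 (1 : A) 1
  simp only [my_one_imp] at e1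
  -- e1 : (△1 ⤳ △△1) ⤳ △1 = △1 ⤳ △△1
  have e2 := m3 (1 : A) (iH3D.box 1)
  -- e2 : (△1 ⤳ △△1) ⤳ △1 = △1
  have e3 : iH3D.box (1 : A) ⤳ iH3D.box (iH3D.box (1 : A)) = iH3D.box (1 : A) :=
    e1.symm.trans e2
  rw [e3, my_refl (iH3D.box (1 : A))] at e1
  exact e1.symm

lemma my_box_box (x : A) : iH3D.box (iH3D.box x) = iH3D.box x := by
  have e := m2 x x
  rw [my_refl x, my_box_one, my_top] at e
  exact h3 _ _ (m1 (iH3D.box x)) e.symm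

lemma my_box_imp (x y : A) :
    iH3D.box (iH3D.box x ⤳ y) = iH3D.box x ⤳ iH3D.box y := by
  have e := m2 (iH3D.box x) y
  simp only [my_box_box] at e
  rw [my_refl (iH3D.box x), my_top, my_one_imp] at e
  exact e

end Aux

/-- Properties of the weak implication in an iH₃△-algebra. -/
theorem stmt4 {A : Type*} [iH3D A] (x y z : A) :
    wimp (1 : A) x = x ∧
    wimp x x = 1 ∧
    wimp x (iH3D.box x) = 1 ∧
    wimp x (wimp y z) = wimp (wimp x y) (wimp x z) ∧
    wimp x (wimp y x) = 1 ∧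
    wimp (wimp (wimp x y) x) x = 1 := by
  simp only [wimp]
  refine ⟨?_, ?_, ?_, ?_, ?_, ?_⟩
  · rw [my_box_one, my_one_imp]
  · exact iH3D.m1 x
  · exact my_refl _
  · rw [my_box_imp]
    exact my_keyS (iH3D.box x) (iH3D.box y) z
  · exact my_trans (iH3D.m1 x) (iH3.h1 x (iH3D.box y))
  · rw [my_box_imp, my_box_imp, iH3D.m3]
    exact iH3D.m1 x
end

section
/- In any iH₃△-algebra A, a subset D ⊆ A is a modal deductive system if and only if it is a weak deductive system, i.e., the set of modal deductive systems of A coincides with the set of weak deductive systems of A. -/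
/-- A modal deductive system. -/
def isMDS {A : Type*} [iH3D A] (D : Set A) : Prop :=
  (1 : A) ∈ D ∧ (∀ x y : A, x ∈ D → iH3.imp x y ∈ D → y ∈ D) ∧
    (∀ x : A, x ∈ D → iH3D.box x ∈ D)

/-- A weak deductive system (w.r.t. the weak implication `x↣y := △x→y`). -/
def isWDS {A : Type*} [iH3D A] (D : Set A) : Prop :=
  (1 : A) ∈ D ∧ ∀ x y : A, x ∈ D → iH3.imp (iH3D.box x) y ∈ D → y ∈ D

namespace iH3aux

open iH3

variable {A : Type*} [iH3 A]

/-- Modus ponens at the level of equations: if `1 → b = 1` then `b = 1`. -/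
lemma mp1 (b : A) (h : imp (1 : A) b = 1) : b = 1 := by
  apply h3 b 1
  · have : imp b (imp (1 : A) b) = 1 := h1 b 1
    rwa [h] at this
  · exact h

lemma mp {a b : A} (ha : a = 1) (h : imp a b = 1) : b = 1 := by
  subst ha; exact mp1 b h

/-- Reflexivity: `a → a = 1`. -/
lemma refl (a : A) : imp a a = 1 := by
  have s := h2 a (imp a a) a
  have k1 : imp a (imp (imp a a) a) = 1 := h1 a (imp a a)
  have k2 : imp a (imp a a) = 1 := h1 a a
  exact mp k2 (mp k1 s)

/-- `a → 1 = 1`. -/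
lemma toOne (a : A) : imp a (1 : A) = 1 := by
  have : imp a (imp a a) = 1 := h1 a a
  rwa [refl a] at this

/-- `1 → a = a`. -/
lemma oneImp (a : A) : imp (1 : A) a = a := by
  apply h3
  · have s := h2 (imp (1 : A) a) (1 : A) a
    have r : imp (imp (1 : A) a) (imp (1 : A) a) = 1 := refl _
    have t : imp (imp (1 : A) a) (1 : A) = 1 := toOne _
    exact mp t (mp r s)
  · exact h1 a 1

/-- Transitivity of the order. -/
lemma trans {a b c : A} (hab : imp a b = 1) (hbc : imp b c = 1) :
    imp a c = 1 := by
  have s := h2 a b c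
  have : imp a (imp b c) = 1 := by rw [hbc]; exact toOne a
  exact mp hab (mp this s)

end iH3aux

/-- In any iH₃△-algebra, the modal deductive systems coincide with the
weak deductive systems. -/
theorem stmt5 {A : Type*} [iH3D A] (D : Set A) : isMDS D ↔ isWDS D := by
  constructor
  · rintro ⟨h1D, hMP, hBox⟩
    refine ⟨h1D, fun x y hx hxy => ?_⟩
    exact hMP _ _ (hBox x hx) hxy
  · rintro ⟨h1D, hWMP⟩
    have key : ∀ x y : A, iH3.imp (iH3D.box (iH3.imp x y)) (iH3.imp (iH3D.box x) y) = 1 := by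
      intro x y
      -- △(x→y) → (x→y) = 1
      have h1' : iH3.imp (iH3D.box (iH3.imp x y)) (iH3.imp x y) = 1 := iH3D.m1 _
      -- (x→y) → (△x → y) = 1
      have h2' : iH3.imp (iH3.imp x y) (iH3.imp (iH3D.box x) y) = 1 := by
        have s := iH3.h2 (iH3D.box x) x y
        have hb : iH3.imp (iH3.imp (iH3D.box x) x) (iH3.imp (iH3D.box x) y)
            = iH3.imp (iH3D.box x) y := by
          rw [iH3D.m1 x, iH3aux.oneImp]
        rw [hb] at s
        have k : iH3.imp (iH3.imp x y) (iH3.imp (iH3D.box x) (iH3.imp x y)) = 1 :=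
          iH3.h1 _ _
        exact iH3aux.trans k s
      exact iH3aux.trans h1' h2'
    refine ⟨h1D, fun x y hx hxy => ?_, fun x hx => ?_⟩
    · -- ordinary modus ponens
      -- from x→y ∈ D, get △x→y ∈ D via weak MP with △(x→y)→(△x→y) = 1 ∈ D
      have step : iH3.imp (iH3D.box x) y ∈ D := by
        apply hWMP (iH3.imp x y) _ hxy
        rw [key x y]; exact h1D
      exact hWMP x y hx step
    · -- x ∈ D implies △x ∈ D, via weak MP with △x→△x = 1 ∈ D
      apply hWMP x (iH3D.box x) hx
      rw [iH3aux.refl]; exact h1D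
end

section
/- Let A be an H₃∨△-algebra and a, b, c ∈ A. Then: (1) if a→b = 1 then a∨b = b; (2) if a→c = 1 and b→c = 1 then (a∨b)→c = 1; (3) a→(a∨b) = 1; (4) (a→c)→((b→c)→((a∨b)→c)) = 1; (5) △(a∨b) = △a ∨ △b; (6) ∇(a∨b) = ∇a ∨ ∇b. -/
class H3vD (A : Type*) extends One A where
  imp : A → A → A
  sup : A → A → A
  box : A → A
  h1 : ∀ x y : A, imp x (imp y x) = 1
  h2 : ∀ x y z : A, imp (imp x (imp y z)) (imp (imp x y) (imp x z)) = 1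
  h3 : ∀ x y : A, imp x y = 1 → imp y x = 1 → x = y
  it3 : ∀ x y z : A, imp (imp (imp x y) z) (imp (imp (imp z x) z) z) = 1
  m1 : ∀ x : A, imp (box x) x = 1
  m2 : ∀ x y : A, imp (imp (imp y (box y)) (imp x (box (box x)))) (box (imp x y)) = imp (box x) (box (box y))
  m3 : ∀ x y : A, imp (imp (box x) (box y)) (box x) = box x
  sup_assoc : ∀ x y z : A, sup x (sup y z) = sup (sup x y) z
  sup_comm : ∀ x y : A, sup x y = sup y x
  sup_idem : ∀ x : A, sup x x = x
  sup_one : ∀ x : A, sup x 1 = 1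
  sup_ax1 : ∀ x y : A, imp x (sup x y) = 1
  sup_ax2 : ∀ x y : A, imp (imp x y) (imp (sup x y) y) = 1
  box_inf : ∀ x y m : A,
    (imp m x = 1 ∧ imp m y = 1 ∧ ∀ z : A, imp z x = 1 → imp z y = 1 → imp z m = 1) →
    (imp (box m) (box x) = 1 ∧ imp (box m) (box y) = 1 ∧
      ∀ z : A, imp z (box x) = 1 → imp z (box y) = 1 → imp z (box m) = 1)

/-- The possibility operator `∇x := (x→△x)→△x`. -/
def nabla {A : Type*} [H3vD A] (x : A) : A :=
  H3vD.imp (H3vD.imp x (H3vD.box x)) (H3vD.box x)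

namespace H3vDAux

open H3vD

variable {A : Type*} [H3vD A]

lemma htop (x : A) : imp x 1 = 1 := by
  have h := sup_ax1 x (1 : A); rwa [sup_one] at h

lemma hmp {a b : A} (ha : a = 1) (h : imp a b = 1) : b = 1 := by
  rw [ha] at h
  exact h3 b 1 (htop b) h

lemma hrefl (x : A) : imp x x = 1 := by
  have h := h2 x 1 x
  have h' := hmp (h1 x 1) h
  exact hmp (htop x) h'

lemma one_imp (x : A) : imp 1 x = x := by
  have h := h2 (imp 1 x) 1 x
  have h' := hmp (hrefl (imp 1 x)) h
  have h'' := hmp (htop (imp 1 x)) h'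
  exact h3 _ _ h'' (h1 x 1)

lemma htrans {x y z : A} (hxy : imp x y = 1) (hyz : imp y z = 1) : imp x z = 1 := by
  have h : imp x (imp y z) = 1 := by rw [hyz]; exact htop x
  exact hmp hxy (hmp h (h2 x y z))

lemma mpd {a b c : A} (h : imp a (imp b c) = 1) (h' : imp a b = 1) : imp a c = 1 :=
  hmp h' (hmp h (h2 a b c))

lemma exch {a b c : A} (h : imp a (imp b c) = 1) : imp b (imp a c) = 1 :=
  htrans (h1 b a) (hmp h (h2 a b c))

lemma hab (a b : A) : imp a (imp (imp a b) b) = 1 := exch (hrefl (imp a b))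

lemma mono2 (x : A) {y z : A} (h : imp y z = 1) : imp (imp x y) (imp x z) = 1 :=
  hmp (by rw [h]; exact htop x) (h2 x y z)

lemma mono1 (z : A) {x y : A} (h : imp x y = 1) : imp (imp y z) (imp x z) = 1 :=
  exch (htrans h (hab y z))

lemma contrW {a b : A} (h : imp a (imp a b) = 1) : imp a b = 1 :=
  hmp (hrefl a) (hmp h (h2 a a b))

lemma mpd2 {a b c d : A} (h : imp a (imp b (imp c d)) = 1) (h' : imp a (imp b c) = 1) :
    imp a (imp b d) = 1 :=
  mpd (htrans h (h2 b c d)) h'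

lemma Bcomb (x y z : A) : imp (imp y z) (imp (imp x y) (imp x z)) = 1 :=
  htrans (h1 (imp y z) x) (h2 x y z)

lemma part1 {a b : A} (h : imp a b = 1) : sup a b = b :=
  h3 _ _ (hmp h (sup_ax2 a b)) (by have := sup_ax1 b a; rwa [H3vD.sup_comm] at this)

lemma le_sup_r (a b : A) : imp b (sup a b) = 1 := by
  have := sup_ax1 b a; rwa [H3vD.sup_comm] at this

lemma sup_least {a b c : A} (ha : imp a c = 1) (hb : imp b c = 1) : imp (sup a b) c = 1 := by
  have h := sup_ax1 (sup a b) c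
  rwa [← H3vD.sup_assoc, part1 hb, part1 ha] at h

lemma Fthm {u v z : A} (hz : z = 1) : imp u (imp v z) = 1 := by
  rw [hz, htop v]; exact htop u

lemma part4 (a b c : A) :
    imp (imp a c) (imp (imp b c) (imp (sup a b) c)) = 1 := by
  have f1 : imp (imp a c) (imp (imp b c) (imp a c)) = 1 := h1 _ _
  have f2 : imp (imp a c) (imp (imp b c) (imp b c)) = 1 := by
    rw [hrefl (imp b c)]; exact htop _
  have fac := mpd2 (Fthm (sup_ax2 a c)) f1
  have fbc := mpd2 (Fthm (sup_ax2 b c)) f2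
  have hst : imp (imp (sup a c) c) (imp (sup a c) (sup b c)) = 1 := mono2 _ (le_sup_r b c)
  have fst := mpd2 (Fthm hst) fac
  have f4 := mpd2 (Fthm (sup_ax2 (sup a c) (sup b c))) fst
  have f5 := mpd2 (mpd2 (Fthm (Bcomb (sup (sup a c) (sup b c)) (sup b c) c)) fbc) f4
  have hab6 : imp (sup a b) (sup (sup a c) (sup b c)) = 1 :=
    sup_least (htrans (sup_ax1 a c) (sup_ax1 _ _)) (htrans (sup_ax1 b c) (le_sup_r _ _))
  exact mpd2 (Fthm (mono1 c hab6)) f5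

lemma box_one : box (1 : A) = 1 := by
  have hm3 := m3 (1 : A) (box (1 : A))
  have hm2 := m2 (1 : A) (1 : A)
  simp only [one_imp] at hm2
  have hae : imp (box (1 : A)) (box (box (1 : A))) = box (1 : A) := hm2.symm.trans hm3
  have h5 : imp (box (1 : A)) (imp (box (1 : A)) (box (box (1 : A)))) = 1 := by
    rw [hae]; exact hrefl _
  exact hae.symm.trans (contrW h5)

lemma box_mono {x y : A} (h : imp x y = 1) : imp (box x) (box y) = 1 := by
  have hm2 := m2 x y
  rw [h, box_one] at hm2
  exact htrans (hm2.symm.trans (htop _)) (m1 (box y))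

lemma box_idem (x : A) : box (box x) = box x := by
  have hm2 := m2 x x
  rw [hrefl x, box_one] at hm2
  exact h3 _ _ (m1 (box x)) (hm2.symm.trans (htop _))

lemma M2eq (x y : A) :
    imp (box x) (box y) =
      imp (imp (imp y (box y)) (imp x (box x))) (box (imp x y)) := by
  have hm2 := m2 x y
  rw [box_idem, box_idem] at hm2
  exact hm2.symm

lemma t4 (x y : A) : imp (box (imp x y)) (imp (box x) (box y)) = 1 := by
  rw [M2eq]; exact h1 _ _

lemma w_boxed (x : A) : box (imp x (box x)) = imp x (box x) := by
  have h := M2eq x (box x)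
  rw [box_idem] at h
  rw [hrefl (box x)] at h
  rw [one_imp] at h
  exact h3 _ _ (m1 _) h.symm

lemma boxed_imp {p q : A} (hp : box p = p) (hq : box q = q) : box (imp p q) = imp p q := by
  have h := M2eq p q
  rw [hp, hq] at h
  rw [hrefl q, hrefl p, one_imp, one_imp] at h
  exact h.symm

lemma boxed_sup {p q : A} (hp : box p = p) (hq : box q = q) : box (sup p q) = sup p q := by
  refine h3 _ _ (m1 _) (sup_least ?_ ?_)
  · have := box_mono (sup_ax1 p q); rwa [hp] at this
  · have := box_mono (le_sup_r p q); rwa [hq] at this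

lemma peirce_boxed {p : A} (y : A) (hp : box p = p) : imp (imp p (box y)) p = p := by
  have := m3 p y; rwa [hp] at this

lemma sup_eq_boxed {p q : A} (hp : box p = p) (hq : box q = q) :
    sup p q = imp (imp p q) q := by
  have hs : box (sup p q) = sup p q := boxed_sup hp hq
  have d1 : imp (sup p q) (imp (imp p q) q) = 1 := sup_least (hab p q) (h1 q (imp p q))
  have c1 : imp (imp (sup p q) q) (imp p q) = 1 := mono1 q (sup_ax1 p q)
  have c2 : imp (imp (imp p q) q) (imp (imp (sup p q) q) q) = 1 := mono1 q c1
  have c3 : imp (imp (imp (sup p q) q) q) (imp (imp (sup p q) q) (sup p q)) = 1 :=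
    mono2 _ (le_sup_r p q)
  have c4 : imp (imp (sup p q) (box q)) (sup p q) = sup p q := peirce_boxed q hs
  rw [hq] at c4
  rw [c4] at c3
  exact h3 _ _ d1 (htrans c2 c3)

lemma L1eq (x y : A) : imp (imp x y) (imp y x) = imp y x := by
  have t := it3 y x (imp y x)
  rw [hrefl (imp y x), one_imp] at t
  have A3 : imp (imp (imp y x) y) (imp y x) = imp y x := h3 _ _ t (h1 _ _)
  have s1 : imp (imp (imp y x) y) (imp x y) = 1 := mono1 y (h1 x y)
  have s2 : imp (imp x y) (imp (imp (imp x y) (imp y x)) (imp y x)) = 1 := hab _ _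
  have s4 := exch (htrans s1 s2)
  rw [A3] at s4
  exact h3 _ _ s4 (h1 _ _)

lemma pstar (x y : A) :
    imp (imp (box (imp x y)) (box (imp y x))) (box (imp y x)) = 1 := by
  have e1 : imp (box (imp x y)) (box (imp y x)) =
      imp (imp (imp (imp y x) (box (imp y x))) (imp (imp x y) (box (imp x y))))
        (box (imp y x)) := by
    have h := M2eq (imp x y) (imp y x)
    rwa [L1eq x y] at h
  have e2 : imp (box (imp y x)) (box (imp x y)) =
      imp (imp (imp (imp x y) (box (imp x y))) (imp (imp y x) (box (imp y x))))
        (box (imp x y)) := by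
    have h := M2eq (imp y x) (imp x y)
    rwa [L1eq y x] at h
  have c1 : imp (imp (imp y x) (box (imp y x)))
      (imp (imp (imp x y) (box (imp x y))) (imp (imp y x) (box (imp y x)))) = 1 := h1 _ _
  have c2 : imp (imp (imp (imp x y) (box (imp x y))) (imp (imp y x) (box (imp y x))))
      (imp (imp (imp (imp (imp x y) (box (imp x y))) (imp (imp y x) (box (imp y x))))
          (box (imp x y)))
        (box (imp x y))) = 1 := hab _ _
  have c3 : imp
      (imp (imp (imp (imp (imp x y) (box (imp x y))) (imp (imp y x) (box (imp y x))))
          (box (imp x y)))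
        (box (imp x y)))
      (imp (imp (imp (imp (imp x y) (box (imp x y))) (imp (imp y x) (box (imp y x))))
          (box (imp x y)))
        (imp (imp x y) (box (imp x y)))) = 1 := mono2 _ (h1 (box (imp x y)) (imp x y))
  have c4 := htrans (htrans c1 c2) c3
  have c5 := exch c4
  have c6 : imp (imp (box (imp y x)) (box (imp x y)))
      (imp (imp (imp y x) (box (imp y x))) (imp (imp x y) (box (imp x y)))) = 1 := by
    rw [e2]; exact c5
  have c7 := mono1 (box (imp y x)) c6
  have c8 : imp (imp (box (imp y x)) (box (imp x y))) (box (imp y x)) = box (imp y x) :=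
    m3 (imp y x) (imp x y)
  rw [c8] at c7
  rw [e1]
  exact c7

lemma P_one (x y : A) : sup (box (imp x y)) (box (imp y x)) = 1 :=
  (sup_eq_boxed (box_idem (imp x y)) (box_idem (imp y x))).trans (pstar x y)

lemma part5 (a b : A) : box (sup a b) = sup (box a) (box b) := by
  have easy : imp (sup (box a) (box b)) (box (sup a b)) = 1 :=
    sup_least (box_mono (sup_ax1 a b)) (box_mono (le_sup_r a b))
  have d1 : imp (box (imp a b)) (imp (box (sup a b)) (box b)) = 1 :=
    htrans (box_mono (sup_ax2 a b)) (t4 (sup a b) b)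
  have d1' := htrans d1 (mono2 (box (sup a b)) (le_sup_r (box a) (box b)))
  have hba : imp (imp b a) (imp (sup a b) a) = 1 := by
    have := sup_ax2 b a; rwa [H3vD.sup_comm] at this
  have d2 : imp (box (imp b a)) (imp (box (sup a b)) (box a)) = 1 :=
    htrans (box_mono hba) (t4 (sup a b) a)
  have d2' := htrans d2 (mono2 (box (sup a b)) (sup_ax1 (box a) (box b)))
  have dd := sup_least d1' d2'
  rw [P_one a b, one_imp] at dd
  exact h3 _ _ dd easy

lemma nabla_def (x : A) : nabla x = imp (imp x (box x)) (box x) := rfl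

lemma nboxed (x : A) : box (nabla x) = nabla x := by
  rw [nabla_def]; exact boxed_imp (w_boxed x) (box_idem x)

lemma nle (x : A) : imp x (nabla x) = 1 := by
  rw [nabla_def]; exact exch (hrefl (imp x (box x)))

lemma nmin {p x : A} (hp : box p = p) (hxp : imp x p = 1) : imp (nabla x) p = 1 := by
  rw [nabla_def]
  have e1 : imp (imp p (box x)) (imp x (box x)) = 1 := mono1 (box x) hxp
  have e2 : imp (imp (imp x (box x)) (box x)) (imp (imp p (box x)) (box x)) = 1 :=
    mono1 (box x) e1
  have e3 : imp (box x) p = 1 := by have := box_mono hxp; rwa [hp] at this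
  have e4 : imp (imp (imp p (box x)) (box x)) (imp (imp p (box x)) p) = 1 := mono2 _ e3
  have e5 : imp (imp p (box x)) p = p := peirce_boxed x hp
  rw [e5] at e4
  exact htrans e2 e4

lemma part6 (a b : A) : nabla (sup a b) = sup (nabla a) (nabla b) := by
  have hge : imp (sup (nabla a) (nabla b)) (nabla (sup a b)) = 1 :=
    sup_least (nmin (nboxed (sup a b)) (htrans (sup_ax1 a b) (nle (sup a b))))
      (nmin (nboxed (sup a b)) (htrans (le_sup_r a b) (nle (sup a b))))
  have hle : imp (nabla (sup a b)) (sup (nabla a) (nabla b)) = 1 :=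
    nmin (boxed_sup (nboxed a) (nboxed b))
      (sup_least (htrans (nle a) (sup_ax1 (nabla a) (nabla b)))
        (htrans (nle b) (le_sup_r (nabla a) (nabla b))))
  exact h3 _ _ hle hge

end H3vDAux

/-- Basic arithmetic of an H₃∨△-algebra. -/
theorem stmt12 {A : Type*} [H3vD A] (a b c : A) :
    (H3vD.imp a b = 1 → H3vD.sup a b = b) ∧
    (H3vD.imp a c = 1 → H3vD.imp b c = 1 → H3vD.imp (H3vD.sup a b) c = 1) ∧
    H3vD.imp a (H3vD.sup a b) = 1 ∧
    H3vD.imp (H3vD.imp a c)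
      (H3vD.imp (H3vD.imp b c) (H3vD.imp (H3vD.sup a b) c)) = 1 ∧
    H3vD.box (H3vD.sup a b) = H3vD.sup (H3vD.box a) (H3vD.box b) ∧
    nabla (H3vD.sup a b) = H3vD.sup (nabla a) (nabla b) :=
  ⟨fun h => H3vDAux.part1 h,
   fun h h' => H3vDAux.sup_least h h',
   H3vD.sup_ax1 a b,
   H3vDAux.part4 a b c,
   H3vDAux.part5 a b,
   H3vDAux.part6 a b⟩
end

section
/- Let A be an H₃∨△-algebra, I a non-empty set, and {a_i}_{i∈I} a family of elements of A. If the supremum ⋁_{i∈I} a_i exists in A (with respect to the order x ≤ y iff x→y = 1), then the supremum ⋁_{i∈I} △a_i exists and equals △(⋁_{i∈I} a_i); dually, if the infimum ⋀_{i∈I} a_i exists, then ⋀_{i∈I} △a_i exists and equals △(⋀_{i∈I} a_i). -/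
namespace H3vDAux

variable {A : Type*} [H3vD A]

local infixr:60 " ⇨ " => H3vD.imp
local notation "□" => H3vD.box

lemma iRefl (x : A) : (x ⇨ x) = 1 := by
  have h := H3vD.sup_ax1 x x
  rwa [H3vD.sup_idem] at h

lemma iTop (x : A) : (x ⇨ (1 : A)) = 1 := by
  have h := H3vD.sup_ax1 x 1
  rwa [H3vD.sup_one] at h

lemma iMp {a b : A} (h : (a ⇨ b) = 1) (ha : a = 1) : b = 1 := by
  subst ha
  exact (H3vD.h3 1 b h (iTop b)).symm

lemma iTrans {a b c : A} (hab : (a ⇨ b) = 1) (hbc : (b ⇨ c) = 1) : (a ⇨ c) = 1 := by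
  have h1' : (a ⇨ (b ⇨ c)) = 1 := iMp (H3vD.h1 (b ⇨ c) a) hbc
  have h2' : ((a ⇨ b) ⇨ (a ⇨ c)) = 1 := iMp (H3vD.h2 a b c) h1'
  exact iMp h2' hab

lemma iOneImp (x : A) : ((1 : A) ⇨ x) = x := by
  have e := H3vD.h2 ((1 : A) ⇨ x) 1 x
  have e1 : ((((1 : A) ⇨ x) ⇨ (1 : A)) ⇨ (((1 : A) ⇨ x) ⇨ x)) = 1 := iMp e (iRefl _)
  have e2 : ((((1 : A) ⇨ x)) ⇨ x) = 1 := iMp e1 (iTop _)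
  exact H3vD.h3 _ _ e2 (H3vD.h1 x 1)

lemma iMonoR {b c : A} (h : (b ⇨ c) = 1) (a : A) : ((a ⇨ b) ⇨ (a ⇨ c)) = 1 := by
  have h' : (a ⇨ (b ⇨ c)) = 1 := iMp (H3vD.h1 (b ⇨ c) a) h
  exact iMp (H3vD.h2 a b c) h'

lemma iExch {a b c : A} (h : (a ⇨ (b ⇨ c)) = 1) : (b ⇨ (a ⇨ c)) = 1 := by
  have h2' : ((a ⇨ b) ⇨ (a ⇨ c)) = 1 := iMp (H3vD.h2 a b c) h
  exact iTrans (H3vD.h1 b a) h2'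

lemma iAntit {a b : A} (h : (a ⇨ b) = 1) (c : A) : ((b ⇨ c) ⇨ (a ⇨ c)) = 1 := by
  have e : (b ⇨ ((b ⇨ c) ⇨ c)) = 1 := iExch (iRefl (b ⇨ c))
  have e2 : (a ⇨ ((b ⇨ c) ⇨ c)) = 1 := iTrans h e
  exact iExch e2

lemma iPS (a b : A) : (a ⇨ ((a ⇨ b) ⇨ b)) = 1 := iExch (iRefl (a ⇨ b))

lemma iContr {a b : A} (h : (a ⇨ (a ⇨ b)) = 1) : (a ⇨ b) = 1 := by
  have h' : ((a ⇨ a) ⇨ (a ⇨ b)) = 1 := iMp (H3vD.h2 a a b) h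
  rw [iRefl, iOneImp] at h'
  exact h'

lemma leSupL (x y : A) : (x ⇨ H3vD.sup x y) = 1 := H3vD.sup_ax1 x y

lemma leSupR (x y : A) : (y ⇨ H3vD.sup x y) = 1 := by
  have h := H3vD.sup_ax1 y x
  rwa [H3vD.sup_comm y x] at h

lemma supAbsorb {a b : A} (h : (a ⇨ b) = 1) : H3vD.sup a b = b := by
  have h2' : (H3vD.sup a b ⇨ b) = 1 := iMp (H3vD.sup_ax2 a b) h
  exact H3vD.h3 _ _ h2' (leSupR a b)

lemma supLe {x y c : A} (hx : (x ⇨ c) = 1) (hy : (y ⇨ c) = 1) :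
    (H3vD.sup x y ⇨ c) = 1 := by
  have e1 : H3vD.sup y c = c := supAbsorb hy
  have e2 : H3vD.sup x c = c := supAbsorb hx
  have h := H3vD.sup_ax1 (H3vD.sup x y) c
  rw [← H3vD.sup_assoc, e1, e2] at h
  exact h

lemma boxMono {a b : A} (h : (a ⇨ b) = 1) : (□ a ⇨ □ b) = 1 :=
  (H3vD.box_inf a b a ⟨iRefl a, h, fun _ h1 _ => h1⟩).2.1

lemma boxOne : (□ (1 : A)) = 1 := by
  have hm2 := H3vD.m2 (1 : A) (1 : A)
  simp only [iOneImp] at hm2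
  have hm3 := H3vD.m3 (1 : A) (□ (1 : A))
  have ht : ((□ (1 : A)) ⇨ □ (□ (1 : A))) = □ (1 : A) := hm2.symm.trans hm3
  have hc : ((□ (1 : A)) ⇨ ((□ (1 : A)) ⇨ □ (□ (1 : A)))) = 1 := by
    rw [ht]; exact iRefl _
  exact ht.symm.trans (iContr hc)

lemma boxBox (a : A) : □ (□ a) = □ a := by
  have hm2 := H3vD.m2 (1 : A) a
  simp only [boxOne, iOneImp, iTop] at hm2
  exact hm2.symm

lemma bK (a b : A) : ((□ (a ⇨ b)) ⇨ ((□ a) ⇨ □ b)) = 1 := by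
  have hm2 := H3vD.m2 a b
  simp only [boxBox] at hm2
  have h := H3vD.h1 (□ (a ⇨ b)) ((b ⇨ □ b) ⇨ (a ⇨ □ a))
  rw [hm2] at h
  exact h

lemma F4 {u : A} (hu : □ u = u) (c : A) : □ (u ⇨ c) = (u ⇨ □ c) := by
  have hm2 := H3vD.m2 u c
  simp only [boxBox, hu, iRefl, iTop, iOneImp] at hm2
  exact hm2

lemma F6 (a : A) : □ (a ⇨ □ a) = (a ⇨ □ a) := by
  have hm2 := H3vD.m2 a (□ a)
  simp only [boxBox, iRefl, iOneImp] at hm2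
  exact H3vD.h3 _ _ (H3vD.m1 _) hm2

lemma peirceBox {u : A} (hu : □ u = u) (r : A) : ((u ⇨ r) ⇨ u) = u := by
  have base := H3vD.m3 u r
  rw [hu] at base
  have h1' : (((u ⇨ r) ⇨ u) ⇨ ((u ⇨ □ r) ⇨ u)) = 1 := iAntit (iMonoR (H3vD.m1 r) u) u
  rw [base] at h1'
  exact H3vD.h3 _ _ h1' (H3vD.h1 u (u ⇨ r))

lemma ELEM {u : A} (hu : □ u = u) (r : A) : H3vD.sup u (u ⇨ r) = 1 := by
  have huw : (u ⇨ H3vD.sup u (u ⇨ r)) = 1 := leSupL u (u ⇨ r)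
  have hrw : ((u ⇨ r) ⇨ H3vD.sup u (u ⇨ r)) = 1 := leSupR u (u ⇨ r)
  have s1 : ((H3vD.sup u (u ⇨ r) ⇨ u) ⇨ ((u ⇨ r) ⇨ u)) = 1 := iAntit hrw u
  rw [peirceBox hu r] at s1
  have s2 : ((H3vD.sup u (u ⇨ r) ⇨ u) ⇨ H3vD.sup u (u ⇨ r)) = 1 := iTrans s1 huw
  have s3 := H3vD.it3 u r (H3vD.sup u (u ⇨ r))
  have s4 := iMp s3 hrw
  exact iMp s4 s2

lemma xi5 {u : A} (hu : □ u = u) (v p : A) :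
    ((u ⇨ p) ⇨ H3vD.sup (u ⇨ v) p) = 1 := by
  have b1 : (u ⇨ ((u ⇨ p) ⇨ H3vD.sup (u ⇨ v) p)) = 1 := by
    have h : ((u ⇨ p) ⇨ (u ⇨ H3vD.sup (u ⇨ v) p)) = 1 := iMonoR (leSupR (u ⇨ v) p) u
    exact iExch h
  have b2 : ((u ⇨ v) ⇨ ((u ⇨ p) ⇨ H3vD.sup (u ⇨ v) p)) = 1 :=
    iTrans (leSupL (u ⇨ v) p) (H3vD.h1 (H3vD.sup (u ⇨ v) p) (u ⇨ p))
  have hc := supLe b1 b2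
  rw [ELEM hu v, iOneImp] at hc
  exact hc

lemma boxSup {u v : A} (hu : □ u = u) (hv : □ v = v) :
    □ (H3vD.sup u v) = H3vD.sup u v := by
  have l1 : (u ⇨ □ (H3vD.sup u v)) = 1 := by
    have h := boxMono (leSupL u v); rwa [hu] at h
  have l2 : (v ⇨ □ (H3vD.sup u v)) = 1 := by
    have h := boxMono (leSupR u v); rwa [hv] at h
  exact H3vD.h3 _ _ (H3vD.m1 _) (supLe l1 l2)

lemma joinLe {u v : A} (hu : □ u = u) (hv : □ v = v) :
    (((u ⇨ v) ⇨ v) ⇨ H3vD.sup u v) = 1 := by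
  have s1 : ((H3vD.sup u v ⇨ v) ⇨ (u ⇨ v)) = 1 := iAntit (leSupL u v) v
  have s2 : (((u ⇨ v) ⇨ v) ⇨ ((H3vD.sup u v ⇨ v) ⇨ v)) = 1 := iAntit s1 v
  have s3 : (((H3vD.sup u v ⇨ v) ⇨ v) ⇨ ((H3vD.sup u v ⇨ v) ⇨ H3vD.sup u v)) = 1 :=
    iMonoR (leSupR u v) (H3vD.sup u v ⇨ v)
  have s4 := iTrans s2 s3
  rw [peirceBox (boxSup hu hv) v] at s4
  exact s4

/-- the possibility operator -/
abbrev nab (a : A) : A := ((a ⇨ □ a) ⇨ a)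

lemma boxNab (a : A) : □ (nab a) = ((a ⇨ □ a) ⇨ □ a) :=
  F4 (F6 a) a

lemma leBoxNab (a : A) : (a ⇨ □ (nab a)) = 1 := by
  rw [boxNab]; exact iPS a (□ a)

lemma adjFwd {a c : A} (h : (nab a ⇨ c) = 1) : (a ⇨ □ c) = 1 :=
  iTrans (leBoxNab a) (boxMono h)

lemma adjBwd {a c : A} (h : (a ⇨ □ c) = 1) : (nab a ⇨ c) = 1 := by
  have s1 : (nab a ⇨ ((a ⇨ □ a) ⇨ □ c)) = 1 := iMonoR h (a ⇨ □ a)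
  have s2 : (((□ c) ⇨ □ a) ⇨ (a ⇨ □ a)) = 1 := iAntit h (□ a)
  have s3 : (((a ⇨ □ a) ⇨ □ c) ⇨ (((□ c) ⇨ □ a) ⇨ □ c)) = 1 := iAntit s2 (□ c)
  rw [H3vD.m3 c a] at s3
  have s4 : (nab a ⇨ □ c) = 1 := iTrans s1 s3
  exact iTrans s4 (H3vD.m1 c)

lemma E1 (x y : A) :
    (((y ⇨ □ y) ⇨ (x ⇨ □ x)) ⇨ □ (x ⇨ y)) = ((□ x) ⇨ □ y) := by
  have hm2 := H3vD.m2 x y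
  simp only [boxBox] at hm2
  exact hm2

lemma W10 {z : A} (hz : □ z = z) (a : A) :
    ((a ⇨ □ a) ⇨ □ (a ⇨ z)) = ((□ a) ⇨ z) := by
  have hm2 := H3vD.m2 a z
  simp only [boxBox, hz, iRefl, iOneImp] at hm2
  exact hm2

lemma W9 {z : A} (hz : □ z = z) (a : A) :
    ((a ⇨ □ a) ⇨ ((a ⇨ z) ⇨ □ (a ⇨ z))) = 1 := by
  have s1 : ((a ⇨ z) ⇨ ((□ a) ⇨ z)) = 1 := iAntit (H3vD.m1 a) z
  rw [← W10 hz a] at s1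
  exact iExch s1

lemma W22 {z : A} (hz : □ z = z) (a : A) :
    □ ((a ⇨ z) ⇨ a) = ((□ (a ⇨ z)) ⇨ □ a) := by
  have hm2 := H3vD.m2 (a ⇨ z) a
  simp only [boxBox] at hm2
  rw [W9 hz a, iOneImp] at hm2
  exact hm2

lemma boxPLe {z a : A} (hz : □ z = z) (ha : ((□ a) ⇨ z) = 1) :
    ((□ (H3vD.sup a (a ⇨ z))) ⇨ (a ⇨ z)) = 1 := by
  have s1 := H3vD.sup_ax2 (a ⇨ z) a
  have s2 := boxMono s1
  have s3 : ((□ ((a ⇨ z) ⇨ a)) ⇨ ((□ (H3vD.sup (a ⇨ z) a)) ⇨ □ a)) = 1 :=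
    iTrans s2 (bK _ _)
  rw [W22 hz a] at s3
  have s4 : ((□ (H3vD.sup (a ⇨ z) a)) ⇨ (((□ (a ⇨ z)) ⇨ □ a) ⇨ □ a)) = 1 := iExch s3
  have s5 : ((((□ (a ⇨ z)) ⇨ □ a) ⇨ □ a) ⇨ H3vD.sup (□ (a ⇨ z)) (□ a)) = 1 :=
    joinLe (boxBox (a ⇨ z)) (boxBox a)
  have s6 := iTrans s4 s5
  have s7 : (H3vD.sup (□ (a ⇨ z)) (□ a) ⇨ (a ⇨ z)) = 1 :=
    supLe (H3vD.m1 (a ⇨ z)) (iTrans ha (H3vD.h1 z a))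
  have s8 := iTrans s6 s7
  rw [H3vD.sup_comm (a ⇨ z) a] at s8
  exact s8

lemma KQ {z x y : A} (hz : □ z = z) (hx : ((□ x) ⇨ z) = 1) (hy : ((□ y) ⇨ z) = 1) :
    (x ⇨ H3vD.sup y (y ⇨ z)) = 1 := by
  -- (a) chain: y ≤ (z ⇨ □y) ⇨ □(x ⇨ y)
  have s1 : (y ⇨ ((y ⇨ □ y) ⇨ □ y)) = 1 := iPS y (□ y)
  have s2 : ((□ y) ⇨ □ (x ⇨ y)) = 1 := boxMono (H3vD.h1 y x)
  have s3 : (((y ⇨ □ y) ⇨ □ y) ⇨ ((y ⇨ □ y) ⇨ □ (x ⇨ y))) = 1 := iMonoR s2 (y ⇨ □ y)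
  have s13 : (y ⇨ ((y ⇨ □ y) ⇨ □ (x ⇨ y))) = 1 := iTrans s1 s3
  have s4 : (((y ⇨ □ y) ⇨ □ (x ⇨ y)) ⇨
      H3vD.sup ((y ⇨ □ y) ⇨ (x ⇨ □ x)) (□ (x ⇨ y))) = 1 :=
    xi5 (F6 y) (x ⇨ □ x) (□ (x ⇨ y))
  have s5a : (((y ⇨ □ y) ⇨ (x ⇨ □ x)) ⇨
      ((((y ⇨ □ y) ⇨ (x ⇨ □ x)) ⇨ □ (x ⇨ y)) ⇨ □ (x ⇨ y))) = 1 := iPS _ _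
  have s5b : ((□ (x ⇨ y)) ⇨
      ((((y ⇨ □ y) ⇨ (x ⇨ □ x)) ⇨ □ (x ⇨ y)) ⇨ □ (x ⇨ y))) = 1 := H3vD.h1 _ _
  have s5 := supLe s5a s5b
  rw [E1 x y] at s5
  have s6 : ((z ⇨ □ y) ⇨ ((□ x) ⇨ □ y)) = 1 := iAntit hx (□ y)
  have s7 : ((((□ x) ⇨ □ y) ⇨ □ (x ⇨ y)) ⇨ ((z ⇨ □ y) ⇨ □ (x ⇨ y))) = 1 :=
    iAntit s6 (□ (x ⇨ y))
  have s8 : (y ⇨ ((z ⇨ □ y) ⇨ □ (x ⇨ y))) = 1 :=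
    iTrans (iTrans s13 s4) (iTrans s5 s7)
  -- (b) ADJ across the box
  have hγ : □ (z ⇨ □ y) = (z ⇨ □ y) := by
    rw [F4 hz (□ y), boxBox]
  have hbox : □ ((z ⇨ □ y) ⇨ (x ⇨ y)) = ((z ⇨ □ y) ⇨ □ (x ⇨ y)) := F4 hγ (x ⇨ y)
  have s9 : (y ⇨ □ ((z ⇨ □ y) ⇨ (x ⇨ y))) = 1 := by rw [hbox]; exact s8
  have s10 : (nab y ⇨ ((z ⇨ □ y) ⇨ (x ⇨ y))) = 1 := adjBwd s9
  -- (c) monotonicity to p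
  have s11 : ((x ⇨ y) ⇨ (x ⇨ H3vD.sup y (y ⇨ z))) = 1 := iMonoR (leSupL y (y ⇨ z)) x
  have s12 := iMonoR s11 (z ⇨ □ y)
  have s14 : (nab y ⇨ ((z ⇨ □ y) ⇨ (x ⇨ H3vD.sup y (y ⇨ z)))) = 1 := iTrans s10 s12
  have s15 : ((z ⇨ □ y) ⇨ (nab y ⇨ (x ⇨ H3vD.sup y (y ⇨ z)))) = 1 := iExch s14
  -- z-branch
  have s16 : (z ⇨ (nab y ⇨ (x ⇨ H3vD.sup y (y ⇨ z)))) = 1 := by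
    have t1 : (z ⇨ (y ⇨ z)) = 1 := H3vD.h1 z y
    have t2 : (z ⇨ H3vD.sup y (y ⇨ z)) = 1 := iTrans t1 (leSupR y (y ⇨ z))
    have t3 : (z ⇨ (x ⇨ H3vD.sup y (y ⇨ z))) = 1 := iTrans t2 (H3vD.h1 _ x)
    exact iTrans t3 (H3vD.h1 _ (nab y))
  have s17 := supLe s16 s15
  rw [ELEM hz (□ y), iOneImp] at s17
  -- qy-branch
  have s18 : ((y ⇨ □ y) ⇨ (x ⇨ H3vD.sup y (y ⇨ z))) = 1 := by
    have t1 : ((y ⇨ □ y) ⇨ (y ⇨ z)) = 1 := iMonoR hy y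
    have t2 := iTrans t1 (leSupR y (y ⇨ z))
    exact iTrans t2 (H3vD.h1 _ x)
  have s19 := supLe s18 s17
  rw [ELEM (F6 y) y, iOneImp] at s19
  exact s19

end H3vDAux

/-- In an H₃∨△-algebra, with respect to the order `x ≤ y iff x→y = 1`:
if `⋁_{i∈I} a_i` exists then `⋁_{i∈I} △a_i` exists and equals `△⋁_{i∈I} a_i`;
dually for infima. -/
theorem stmt15 {A : Type*} [H3vD A] {I : Type*} [Nonempty I] (a : I → A) :
    (∀ s : A,
      ((∀ i, H3vD.imp (a i) s = 1) ∧
        ∀ z : A, (∀ i, H3vD.imp (a i) z = 1) → H3vD.imp s z = 1) →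
      ((∀ i, H3vD.imp (H3vD.box (a i)) (H3vD.box s) = 1) ∧
        ∀ z : A, (∀ i, H3vD.imp (H3vD.box (a i)) z = 1) →
          H3vD.imp (H3vD.box s) z = 1)) ∧
    (∀ s : A,
      ((∀ i, H3vD.imp s (a i) = 1) ∧
        ∀ z : A, (∀ i, H3vD.imp z (a i) = 1) → H3vD.imp z s = 1) →
      ((∀ i, H3vD.imp (H3vD.box s) (H3vD.box (a i)) = 1) ∧
        ∀ z : A, (∀ i, H3vD.imp z (H3vD.box (a i)) = 1) →
          H3vD.imp z (H3vD.box s) = 1)) := by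
  open H3vDAux in
  constructor
  · rintro s ⟨hub, hlub⟩
    constructor
    · intro i; exact boxMono (hub i)
    · intro z0 hz0
      have hz : H3vD.box (H3vD.box z0) = H3vD.box z0 := boxBox z0
      have hz' : ∀ i, H3vD.imp (H3vD.box (a i)) (H3vD.box z0) = 1 := by
        intro i
        have h := boxMono (hz0 i)
        rwa [boxBox] at h
      have hkq : ∀ j, H3vD.imp s (H3vD.sup (a j) (H3vD.imp (a j) (H3vD.box z0))) = 1 :=
        fun j => hlub _ (fun i => KQ hz (hz' i) (hz' j))
      have h4 : ∀ j, H3vD.imp (H3vD.box s) (H3vD.imp (a j) (H3vD.box z0)) = 1 :=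
        fun j => iTrans (boxMono (hkq j)) (boxPLe hz (hz' j))
      have h5 : ∀ j, H3vD.imp (a j) (H3vD.imp (H3vD.box s) (H3vD.box z0)) = 1 :=
        fun j => iExch (h4 j)
      have h6 : H3vD.imp s (H3vD.imp (H3vD.box s) (H3vD.box z0)) = 1 := hlub _ h5
      have h7 := boxMono h6
      rw [F4 (boxBox s) (H3vD.box z0), boxBox] at h7
      have h8 : H3vD.imp (H3vD.box s) (H3vD.box z0) = 1 := iContr h7
      exact iTrans h8 (H3vD.m1 z0)
  · rintro s ⟨hlb, hglb⟩
    constructor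
    · intro i; exact boxMono (hlb i)
    · intro w hw
      have h1' : ∀ i, H3vD.imp (nab w) (a i) = 1 := fun i => adjBwd (hw i)
      exact adjFwd (hglb _ h1')
end

section
/- The relation ≡ᵢ (α ≡ᵢ β iff ⊢ᵢ α→β and ⊢ᵢ β→α) is a congruence on the algebra of formulas of the calculus iH³△, and the quotient Fmᵢ/≡ᵢ is an iH₃△-algebra with operations |α|→|β| = |α→β|, |α|∧|β| = |α∧β|, △|α| = |△α|, and greatest element 1 = { α : ⊢ᵢ α }; moreover |α| ≤ |β| if and only if ⊢ᵢ α→β. -/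
/-- Formulas of the calculus iH³△, over connectives →, ∧, △. -/
inductive Fm : Type
  | var : Nat → Fm
  | imp : Fm → Fm → Fm
  | inf : Fm → Fm → Fm
  | box : Fm → Fm

/-- Derivability in the calculus iH³△. -/
inductive Prov : Fm → Prop
  | a1 (α β : Fm) : Prov (α.imp (β.imp α))
  | a2 (α β γ : Fm) : Prov ((α.imp (β.imp γ)).imp ((α.imp β).imp (α.imp γ)))
  | a3 (α β γ : Fm) : Prov (((α.imp β).imp γ).imp (((γ.imp α).imp γ).imp γ))
  | a4 (α β : Fm) : Prov ((α.inf β).imp β)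
  | a5 (α β : Fm) : Prov ((α.inf β).imp α)
  | a6 (α β : Fm) : Prov (α.imp (β.imp (α.inf β)))
  | a7 (α : Fm) : Prov (α.box.imp α)
  | a8 (α β : Fm) : Prov ((α.box.imp β).box.imp (α.box.imp β.box))
  | a9 (α β : Fm) : Prov (((β.imp β.box).imp (α.imp ((α.imp β).box))).imp ((α.imp β).box))
  | a10 (α β γ : Fm) : Prov (((α.box.imp β).imp γ).imp ((α.box.imp γ).imp γ))
  | mp {α β : Fm} : Prov α → Prov (α.imp β) → Prov β
  | nec {α : Fm} : Prov α → Prov α.box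
  | rinf {α β : Fm} : Prov (α.imp β) → Prov (α.imp (α.inf β))

/-- Interderivability: `α ≡ᵢ β` iff `⊢ᵢ α→β` and `⊢ᵢ β→α`. -/
def FEquiv (α β : Fm) : Prop := Prov (α.imp β) ∧ Prov (β.imp α)

/-- A canonical theorem, representing the class `1` of the Lindenbaum-Tarski
algebra. -/
def top : Fm := (Fm.var 0).imp (Fm.var 0)

/-! ### Auxiliary lemmas -/

lemma provId (α : Fm) : Prov (α.imp α) :=
  (Prov.a1 α α).mp ((Prov.a1 α (α.imp α)).mp (Prov.a2 α (α.imp α) α))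

/-- Derivations from a list of hypotheses, with modus ponens only. -/
inductive D : List Fm → Fm → Prop
  | ax {Γ α} : Prov α → D Γ α
  | hyp {Γ α} : α ∈ Γ → D Γ α
  | mp {Γ α β} : D Γ α → D Γ (α.imp β) → D Γ β

theorem ded {Γ : List Fm} {α β : Fm} (h : D (α :: Γ) β) : D Γ (α.imp β) := by
  induction h with
  | ax h => exact .mp (.ax h) (.ax (Prov.a1 _ _))
  | hyp h =>
    rcases List.mem_cons.1 h with rfl | h
    · exact .ax (provId _)
    · exact .mp (.hyp h) (.ax (Prov.a1 _ _))
  | mp _ _ ih1 ih2 => exact .mp ih1 (.mp ih2 (.ax (Prov.a2 _ _ _)))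

theorem closed {α : Fm} (h : D [] α) : Prov α := by
  have key : ∀ (Γ : List Fm) (β : Fm), D Γ β → Γ = [] → Prov β := by
    intro Γ β h
    induction h with
    | ax h => exact fun _ => h
    | hyp hm => rintro rfl; simp at hm
    | mp _ _ ih1 ih2 => exact fun e => (ih1 e).mp (ih2 e)
  exact key [] α h rfl

lemma ptrans {α β γ : Fm} (h1 : Prov (α.imp β)) (h2 : Prov (β.imp γ)) :
    Prov (α.imp γ) :=
  closed (ded (.mp (.mp (.hyp (by simp)) (.ax h1)) (.ax h2)))

lemma boxMono {α β : Fm} (h : Prov (α.imp β)) : Prov (α.box.imp β.box) :=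
  ((ptrans (Prov.a7 α) h).nec).mp (Prov.a8 α β)

/-- The K-style lemma: `⊢ △(α→β)→(△α→△β)`. -/
lemma lemK (α β : Fm) : Prov ((α.imp β).box.imp (α.box.imp β.box)) := by
  have pre : Prov ((α.imp β).imp (α.box.imp β)) :=
    closed (ded (ded (.mp (.mp (.hyp (by simp)) (.ax (Prov.a7 α)))
      (.hyp (by simp)))))
  exact ptrans (boxMono pre) (Prov.a8 α β)

/-- `⊢ △α→△△α`. -/
lemma lemDD (α : Fm) : Prov (α.box.imp α.box.box) :=
  ((provId α.box).nec).mp (Prov.a8 α α.box)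

lemma provTop : Prov top := provId (Fm.var 0)

lemma prov_iff_equiv_top (α : Fm) : Prov α ↔ FEquiv α top := by
  constructor
  · exact fun h => ⟨provTop.mp (Prov.a1 top α), h.mp (Prov.a1 α top)⟩
  · exact fun ⟨_, h2⟩ => provTop.mp h2

/-- The relation `≡ᵢ` is a congruence on the algebra of formulas of iH³△, and
the quotient `Fmᵢ/≡ᵢ` is an iH₃△-algebra with the induced operations, whose
greatest element `1` is the class of theorems; the order satisfies
`|α| ≤ |β|` iff `⊢ᵢ α→β`. -/
theorem stmt16 :
    Equivalence FEquiv ∧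
    (∀ α α' β β' : Fm, FEquiv α α' → FEquiv β β' → FEquiv (α.imp β) (α'.imp β')) ∧
    (∀ α α' β β' : Fm, FEquiv α α' → FEquiv β β' → FEquiv (α.inf β) (α'.inf β')) ∧
    (∀ α α' : Fm, FEquiv α α' → FEquiv α.box α'.box) ∧
    -- `1` is the class of all theorems
    (∀ α : Fm, Prov α ↔ FEquiv α top) ∧
    -- the quotient satisfies (H1), (H2), (H3), (IT3)
    (∀ α β : Fm, Prov (α.imp (β.imp α))) ∧
    (∀ α β γ : Fm, Prov ((α.imp (β.imp γ)).imp ((α.imp β).imp (α.imp γ)))) ∧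
    (∀ α β : Fm, Prov (α.imp β) → Prov (β.imp α) → FEquiv α β) ∧
    (∀ α β γ : Fm, Prov (((α.imp β).imp γ).imp (((γ.imp α).imp γ).imp γ))) ∧
    -- the quotient satisfies (iH1)-(iH4)
    (∀ α β γ : Fm, FEquiv (α.inf (β.inf γ)) ((α.inf β).inf γ)) ∧
    (∀ α : Fm, FEquiv (α.inf α) α) ∧
    (∀ α β : Fm, FEquiv (α.inf (α.imp β)) (α.inf β)) ∧
    (∀ α β γ : Fm, Prov ((α.imp (β.inf γ)).imp ((α.imp γ).inf (α.imp β)))) ∧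
    -- the quotient satisfies (M1), (M2), (M3)
    (∀ α : Fm, Prov (α.box.imp α)) ∧
    (∀ α β : Fm, FEquiv (((β.imp β.box).imp (α.imp α.box.box)).imp ((α.imp β).box))
      (α.box.imp β.box.box)) ∧
    (∀ α β : Fm, FEquiv ((α.box.imp β.box).imp α.box) α.box) ∧
    -- `|α| ≤ |β|` iff `⊢ᵢ α→β`
    (∀ α β : Fm, FEquiv (α.imp β) top ↔ Prov (α.imp β)) := by
  refine ⟨⟨fun α => ⟨provId α, provId α⟩, fun h => ⟨h.2, h.1⟩,
      fun h1 h2 => ⟨ptrans h1.1 h2.1, ptrans h2.2 h1.2⟩⟩,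
    ?_, ?_, fun α α' h => ⟨boxMono h.1, boxMono h.2⟩,
    prov_iff_equiv_top, Prov.a1, Prov.a2, fun _ _ h1 h2 => ⟨h1, h2⟩, Prov.a3,
    ?_, fun α => ⟨Prov.a5 α α, Prov.rinf (provId α)⟩, ?_, ?_, Prov.a7, ?_, ?_,
    fun α β => (prov_iff_equiv_top (α.imp β)).symm⟩
  · -- congruence for →
    intro α α' β β' hα hβ
    have key : ∀ a a' b b' : Fm, Prov (a'.imp a) → Prov (b.imp b') →
        Prov ((a.imp b).imp (a'.imp b')) := by
      intro a a' b b' h1 h2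
      exact closed (ded (ded (.mp (.mp (.mp (.hyp (by simp)) (.ax h1))
        (.hyp (by simp))) (.ax h2))))
    exact ⟨key _ _ _ _ hα.2 hβ.1, key _ _ _ _ hα.1 hβ.2⟩
  · -- congruence for ∧
    intro α α' β β' hα hβ
    have key : ∀ a a' b b' : Fm, Prov (a.imp a') → Prov (b.imp b') →
        Prov ((a.inf b).imp (a'.inf b')) := by
      intro a a' b b' h1 h2
      have da : D [a.inf b] a' := .mp (.mp (.hyp (by simp)) (.ax (Prov.a5 a b))) (.ax h1)
      have db : D [a.inf b] b' := .mp (.mp (.hyp (by simp)) (.ax (Prov.a4 a b))) (.ax h2)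
      exact closed (ded (.mp db (.mp da (.ax (Prov.a6 a' b')))))
    exact ⟨key _ _ _ _ hα.1 hβ.1, key _ _ _ _ hα.2 hβ.2⟩
  · -- associativity of ∧
    intro α β γ
    constructor
    · refine closed (ded ?_)
      have ha : D [α.inf (β.inf γ)] α := .mp (.hyp (by simp)) (.ax (Prov.a5 α (β.inf γ)))
      have hbc : D [α.inf (β.inf γ)] (β.inf γ) :=
        .mp (.hyp (by simp)) (.ax (Prov.a4 α (β.inf γ)))
      have hb : D [α.inf (β.inf γ)] β := .mp hbc (.ax (Prov.a5 β γ))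
      have hc : D [α.inf (β.inf γ)] γ := .mp hbc (.ax (Prov.a4 β γ))
      exact .mp hc (.mp (.mp hb (.mp ha (.ax (Prov.a6 α β)))) (.ax (Prov.a6 _ γ)))
    · refine closed (ded ?_)
      have hab : D [(α.inf β).inf γ] (α.inf β) :=
        .mp (.hyp (by simp)) (.ax (Prov.a5 (α.inf β) γ))
      have ha : D [(α.inf β).inf γ] α := .mp hab (.ax (Prov.a5 α β))
      have hb : D [(α.inf β).inf γ] β := .mp hab (.ax (Prov.a4 α β))
      have hc : D [(α.inf β).inf γ] γ := .mp (.hyp (by simp)) (.ax (Prov.a4 (α.inf β) γ))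
      exact .mp (.mp hc (.mp hb (.ax (Prov.a6 β γ)))) (.mp ha (.ax (Prov.a6 α _)))
  · -- α∧(α→β) ≡ α∧β
    intro α β
    constructor
    · refine closed (ded ?_)
      have ha : D [α.inf (α.imp β)] α := .mp (.hyp (by simp)) (.ax (Prov.a5 α (α.imp β)))
      have hb : D [α.inf (α.imp β)] β :=
        .mp ha (.mp (.hyp (by simp)) (.ax (Prov.a4 α (α.imp β))))
      exact .mp hb (.mp ha (.ax (Prov.a6 α β)))
    · refine closed (ded ?_)
      have ha : D [α.inf β] α := .mp (.hyp (by simp)) (.ax (Prov.a5 α β))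
      have hab : D [α.inf β] (α.imp β) :=
        .mp (.mp (.hyp (by simp)) (.ax (Prov.a4 α β))) (.ax (Prov.a1 β α))
      exact .mp hab (.mp ha (.ax (Prov.a6 α (α.imp β))))
  · -- (iH4)
    intro α β γ
    refine closed (ded ?_)
    have hbc : D (α :: [α.imp (β.inf γ)]) (β.inf γ) :=
      .mp (.hyp (show α ∈ _ by simp)) (.hyp (show α.imp (β.inf γ) ∈ _ by simp))
    have hc : D [α.imp (β.inf γ)] (α.imp γ) := ded (.mp hbc (.ax (Prov.a4 β γ)))
    have hb : D [α.imp (β.inf γ)] (α.imp β) := ded (.mp hbc (.ax (Prov.a5 β γ)))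
    exact .mp hb (.mp hc (.ax (Prov.a6 _ _)))
  · -- (M2)
    intro α β
    constructor
    · -- (X→△(α→β)) → (△α→△△β)
      refine closed (ded (ded ?_))
      set X := (β.imp β.box).imp (α.imp α.box.box) with hX
      have hda : D [α.box, X.imp (α.imp β).box] α.box := .hyp (by simp)
      have hdda : D [α.box, X.imp (α.imp β).box] α.box.box := .mp hda (.ax (lemDD α))
      have hx : D [α.box, X.imp (α.imp β).box] X :=
        .mp (.mp hdda (.ax (Prov.a1 α.box.box α))) (.ax (Prov.a1 _ (β.imp β.box)))
      have hdab : D [α.box, X.imp (α.imp β).box] (α.imp β).box :=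
        .mp hx (.hyp (by simp))
      have hdb : D [α.box, X.imp (α.imp β).box] β.box :=
        .mp hda (.mp hdab (.ax (lemK α β)))
      exact .mp hdb (.ax (lemDD β))
    · -- (△α→△△β) → (X→△(α→β))
      refine closed (ded (ded ?_))
      set X := (β.imp β.box).imp (α.imp α.box.box) with hX
      set Γ : List Fm := [X, α.box.imp β.box.box] with hΓ
      have inner : D (α :: (β.imp β.box) :: Γ) (α.imp β).box := by
        have hdda : D (α :: (β.imp β.box) :: Γ) α.box.box :=
          .mp (.hyp (show α ∈ _ by simp))
            (.mp (.hyp (show β.imp β.box ∈ _ by simp))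
              (.hyp (show X ∈ _ by simp [hΓ])))
        have hda : D (α :: (β.imp β.box) :: Γ) α.box := .mp hdda (.ax (Prov.a7 α.box))
        have hddb : D (α :: (β.imp β.box) :: Γ) β.box.box :=
          .mp hda (.hyp (show α.box.imp β.box.box ∈ _ by simp [hΓ]))
        have hdb : D (α :: (β.imp β.box) :: Γ) β.box := .mp hddb (.ax (Prov.a7 β.box))
        exact .mp hdb (.ax (boxMono (Prov.a1 β α)))
      exact .mp (ded (ded inner)) (.ax (Prov.a9 α β))
  · -- (M3)
    intro α β
    refine ⟨closed (ded ?_), Prov.a1 α.box (α.box.imp β.box)⟩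
    have h1 : D [(α.box.imp β.box).imp α.box] ((α.box.imp α.box).imp α.box) :=
      .mp (.hyp (by simp)) (.ax (Prov.a10 α β.box α.box))
    exact .mp (.ax (provId α.box)) h1
end
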